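/- Let G be a Cayley graph of a finitely generated group with exponential growth rate α = lim_k |B(k)|^{1/k} > 1. Then G does not satisfy exponential containment of any rate λ < α; hence the critical rate λ_c(G) equals α. -/

import Mathlib

open scoped ENNReal NNReal

namespace Firefight

variable {V : Type*}

/-- Vertices protected before round `n+1`'s spread: the strategy `s` plays `s n` in round `n+1`. -/
def protSet (s : ℕ → Set V) : ℕ → Set V
  | 0 => ∅
  | n + 1 => protSet s n ∪ s n

/-- Burning vertices after `n` rounds. -/
def burnSet (G : SimpleGraph V) (X₀ : Set V) (s : ℕ → Set V) : ℕ → Set V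
  | 0 => X₀
  | n + 1 => burnSet G X₀ s n ∪
      {v | v ∉ protSet s (n + 1) ∧ ∃ u ∈ burnSet G X₀ s n, G.Adj u v}

/-- A strategy is valid for the budget sequence `f` if in round `n+1` it protects at most
`f (n+1)` vertices, none of which is already burning. -/
def ValidStrategy (G : SimpleGraph V) (f : ℕ → ℕ) (X₀ : Set V) (s : ℕ → Set V) : Prop :=
  ∀ n, (s n).Finite ∧ (s n).ncard ≤ f (n + 1) ∧ Disjoint (s n) (burnSet G X₀ s n)

/-- The fire is contained: only finitely many vertices ever burn. -/
def ContainsFire (G : SimpleGraph V) (X₀ : Set V) (s : ℕ → Set V) : Prop :=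
  (⋃ n, burnSet G X₀ s n).Finite

/-- `G` satisfies `f_n`-containment. -/
def Containment (G : SimpleGraph V) (f : ℕ → ℕ) : Prop :=
  ∀ X₀ : Set V, X₀.Finite → ∃ s, ValidStrategy G f X₀ s ∧ ContainsFire G X₀ s

/-- Exponential containment of rate `lam`: `f_n`-containment for some `f_n = O(lam ^ n)`. -/
def ExpContainment (G : SimpleGraph V) (lam : ℝ≥0∞) : Prop :=
  ∃ f : ℕ → ℕ, (∃ c : ℝ≥0, ∀ n, (f n : ℝ≥0∞) ≤ c * lam ^ n) ∧ Containment G f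

/-- The critical exponential containment rate. -/
noncomputable def lambdaC (G : SimpleGraph V) : ℝ≥0∞ :=
  sInf {lam | ExpContainment G lam}

/-- A set of edges whose removal leaves the root `r` in a finite component. -/
def IsCutset (G : SimpleGraph V) (r : V) (Cut : Set (Sym2 V)) : Prop :=
  Cut ⊆ G.edgeSet ∧ {v | (G.deleteEdges Cut).Reachable r v}.Finite

/-- The distance `|e|` of an edge from the root: the distance to its farther endpoint. -/
noncomputable def edgeDist (G : SimpleGraph V) (r : V) (e : Sym2 V) : ℕ :=
  Sym2.lift ⟨fun a b => max (G.dist r a) (G.dist r b), fun a b => max_comm _ _⟩ e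

/-- `∑_{e ∈ Cut} lam ^ {-|e|}`. -/
noncomputable def cutsetWeight (G : SimpleGraph V) (r : V) (lam : ℝ≥0∞)
    (Cut : Set (Sym2 V)) : ℝ≥0∞ :=
  ∑' e : Cut, (lam ^ edgeDist G r (e : Sym2 V))⁻¹

/-- The branching number of a tree rooted at `r`. -/
noncomputable def branchingNumber (G : SimpleGraph V) (r : V) : ℝ≥0∞ :=
  sSup {lam : ℝ≥0∞ | ∃ ε : ℝ≥0∞, 0 < ε ∧ ∀ Cut, IsCutset G r Cut → ε ≤ cutsetWeight G r lam Cut}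

/-- The ball of radius `k` about `r`. -/
def ball (G : SimpleGraph V) (r : V) (k : ℕ) : Set V :=
  {v | G.dist r v ≤ k}

end Firefight

open Firefight

/-- The Cayley graph of a group `Γ` with respect to a set `S` of generators
(edges correspond to right multiplication by a generator or its inverse). -/
def cayley (Γ : Type*) [Group Γ] (S : Set Γ) : SimpleGraph Γ where
  Adj v w := v ≠ w ∧ (v⁻¹ * w ∈ S ∨ w⁻¹ * v ∈ S)
  symm := ⟨fun v w h => ⟨h.1.symm, h.2.symm⟩⟩
  loopless := ⟨fun v h => h.1 rfl⟩

/-!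
Lower bound. Start the fire on a ball `B(k₀)` of a vertex-transitive graph. A vertex of `B(n)`
that never burns lies within distance `n - k` of a vertex at distance `k` protected during the
first `k - k₀` rounds, whence `|B(n)| ≤ E + ∑_{k₀ < k ≤ n} a_k |B(n - k)|`, where `E` counts the
burnt vertices and `a_k = O(λ^k)` is bounded by the budget of `k - k₀` rounds. For `k₀` large this
renewal inequality gives `|B(n)| = O(x^n)` for any `x > λ`, impossible if `λ < x < α`.

Upper bound. For `μ > α`, protecting the whole sphere of radius `R + n + 1` in round `n + 1`, from
some round on, costs `|B(R + n + 1)| = O(μ^n)` and confines a fire started inside `B(R)`.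
-/

open Filter Topology

namespace SimpleGraph

variable {V W : Type*} {G : SimpleGraph V} {H : SimpleGraph W}

lemma Hom.edist_le (f : G →g H) (u v : V) : H.edist (f u) (f v) ≤ G.edist u v := by
  rcases eq_or_ne (G.edist u v) ⊤ with h | h
  · simp [h]
  obtain ⟨p, hp⟩ := exists_walk_of_edist_ne_top h
  rw [← hp, ← p.length_map f]
  exact SimpleGraph.edist_le _

lemma Iso.edist_eq (φ : G ≃g H) (u v : V) : H.edist (φ u) (φ v) = G.edist u v :=
  le_antisymm (Hom.edist_le φ.toHom u v) <| by
    simpa using Hom.edist_le φ.symm.toHom (φ u) (φ v)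

lemma Iso.dist_eq (φ : G ≃g H) (u v : V) : H.dist (φ u) (φ v) = G.dist u v := by
  simp only [dist, φ.edist_eq]

namespace Walk

variable {u v : V} {p : G.Walk u v}

lemma dist_getVert_of_length_eq_dist (hp : p.length = G.dist u v) (j : ℕ) :
    G.dist u (p.getVert j) = min j p.length := by
  rw [← length_eq_dist_of_subwalk hp (p.isSubwalk_take j), take_length]

lemma dist_getVert_end_of_length_eq_dist (hp : p.length = G.dist u v) (j : ℕ) :
    G.dist (p.getVert j) v = p.length - j := by
  rw [← length_eq_dist_of_subwalk hp (p.isSubwalk_drop j), drop_length]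

end Walk

end SimpleGraph

lemma Set.ncard_biUnion_le_ncard_mul {ι α : Type*} {t : Set ι} (ht : t.Finite) {s : ι → Set α}
    {c : ℕ} (hs : ∀ i ∈ t, (s i).ncard ≤ c) : (⋃ i ∈ t, s i).ncard ≤ t.ncard * c := by
  calc (⋃ i ∈ t, s i).ncard ≤ ∑ i ∈ ht.toFinset, (s i).ncard := by
        simpa using ht.toFinset.set_ncard_biUnion_le s
    _ ≤ ∑ _i ∈ ht.toFinset, c := Finset.sum_le_sum fun i hi => hs i (ht.mem_toFinset.1 hi)
    _ = t.ncard * c := by rw [Finset.sum_const, smul_eq_mul, Set.ncard_eq_toFinset_card t ht]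

namespace Firefight

variable {V : Type*} {G : SimpleGraph V} {r : V} {s : ℕ → Set V} {X₀ : Set V} {f : ℕ → ℕ}

lemma ball_mono (G : SimpleGraph V) (r : V) {k k' : ℕ} (h : k ≤ k') :
    ball G r k ⊆ ball G r k' :=
  fun _ hv => le_trans hv h

lemma image_ball_iso {W : Type*} {H : SimpleGraph W} (φ : G ≃g H) (r : V) (k : ℕ) :
    φ '' ball G r k = ball H (φ r) k := by
  ext w
  obtain ⟨v, rfl⟩ := φ.surjective w
  simp [ball, φ.dist_eq]

lemma protSet_mono (s : ℕ → Set V) : Monotone (protSet s) :=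
  monotone_nat_of_le_succ fun _ => Set.subset_union_left

lemma protSet_finite (hs : ∀ n, (s n).Finite) (n : ℕ) : (protSet s n).Finite := by
  induction n with
  | zero => simp [protSet]
  | succ n ih => exact ih.union (hs n)

lemma ValidStrategy.ncard_protSet_le (hv : ValidStrategy G f X₀ s) (n : ℕ) :
    (protSet s n).ncard ≤ ∑ m ∈ Finset.range n, f (m + 1) := by
  induction n with
  | zero => simp [protSet]
  | succ n ih =>
    rw [Finset.sum_range_succ]
    exact (Set.ncard_union_le _ _).trans (add_le_add ih (hv n).2.1)

lemma burnSet_mono (G : SimpleGraph V) (X₀ : Set V) (s : ℕ → Set V) :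
    Monotone (burnSet G X₀ s) :=
  monotone_nat_of_le_succ fun _ => Set.subset_union_left

lemma ExpContainment.mono {l₁ l₂ : ℝ≥0∞} (h : ExpContainment G l₁) (hl : l₁ ≤ l₂) :
    ExpContainment G l₂ := by
  obtain ⟨f, ⟨c, hc⟩, hf⟩ := h
  exact ⟨f, ⟨c, fun n => (hc n).trans (by gcongr)⟩, hf⟩

/-- Along a geodesic from `r` to `v`, the vertex at distance `k₀ + i` burns by round `i` unless
some vertex of the geodesic beyond `ball G r k₀` was protected in time. -/
lemma exists_mem_protSet_of_notMem_burnSet (hc : G.Connected) (s : ℕ → Set V) (k₀ : ℕ) {v : V}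
    (hv : v ∉ ⋃ m, burnSet G (ball G r k₀) s m) :
    ∃ w, k₀ < G.dist r w ∧ w ∈ protSet s (G.dist r w - k₀) ∧
      G.dist r w + G.dist w v = G.dist r v := by
  obtain ⟨p, hp⟩ := hc.exists_walk_length_eq_dist r v
  by_contra! hno
  have hburn : ∀ i, p.getVert (k₀ + i) ∈ burnSet G (ball G r k₀) s i := by
    intro i
    induction i with
    | zero =>
      show G.dist r (p.getVert k₀) ≤ k₀
      rw [p.dist_getVert_of_length_eq_dist hp]
      exact min_le_left _ _
    | succ i ih =>
      by_cases hi : k₀ + i < p.length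
      · have hd := p.dist_getVert_of_length_eq_dist hp (k₀ + i + 1)
        have hd' := p.dist_getVert_end_of_length_eq_dist hp (k₀ + i + 1)
        rw [min_eq_left (by omega)] at hd
        refine Or.inr ⟨fun hprot => hno (p.getVert (k₀ + i + 1)) (by omega) ?_ (by omega), _, ih,
          p.adj_getVert_succ hi⟩
        rwa [hd, show k₀ + i + 1 - k₀ = i + 1 by omega]
      · rw [p.getVert_of_length_le (by omega : p.length ≤ k₀ + (i + 1)),
          ← p.getVert_of_length_le (by omega : p.length ≤ k₀ + i)]
        exact burnSet_mono _ _ _ (Nat.le_succ i) ih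
  refine hv (Set.mem_iUnion.2 ⟨p.length, ?_⟩)
  simpa [p.getVert_of_length_le] using hburn p.length

lemma ncard_ball_le_of_containsFire (hc : G.Connected) (htrans : ∀ w, ∃ φ : G ≃g G, φ r = w)
    (hfin : ∀ m, (ball G r m).Finite) (hs : ∀ n, (s n).Finite) {k₀ : ℕ}
    (hB : ContainsFire G (ball G r k₀) s) (n : ℕ) :
    (ball G r n).ncard ≤ (⋃ m, burnSet G (ball G r k₀) s m).ncard +
      ∑ k ∈ Finset.Ioc k₀ n,
        ({w | G.dist r w = k} ∩ protSet s (k - k₀)).ncard * (ball G r (n - k)).ncard := by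
  set B := ⋃ m, burnSet G (ball G r k₀) s m
  set D : ℕ → Set V := fun k => {w | G.dist r w = k} ∩ protSet s (k - k₀)
  have hball : ∀ w m, (ball G w m).Finite ∧ (ball G w m).ncard = (ball G r m).ncard := by
    intro w m
    obtain ⟨φ, rfl⟩ := htrans w
    rw [← image_ball_iso]
    exact ⟨(hfin m).image φ, Set.ncard_image_of_injective _ φ.injective⟩
  have hD : ∀ k, (D k).Finite := fun k => (protSet_finite hs _).subset Set.inter_subset_right
  have hcover : ball G r n ⊆ B ∪ ⋃ k ∈ Finset.Ioc k₀ n, ⋃ w ∈ D k, ball G w (n - k) := by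
    intro v (hv : G.dist r v ≤ n)
    by_cases hvB : v ∈ B
    · exact Or.inl hvB
    obtain ⟨w, hk₀, hprot, hsum⟩ := exists_mem_protSet_of_notMem_burnSet hc s k₀ hvB
    refine Or.inr (Set.mem_biUnion (x := G.dist r w) (Finset.mem_Ioc.2 ⟨hk₀, by omega⟩) ?_)
    exact Set.mem_biUnion ⟨rfl, hprot⟩ (show G.dist w v ≤ n - G.dist r w by omega)
  have hUfin : (⋃ k ∈ Finset.Ioc k₀ n, ⋃ w ∈ D k, ball G w (n - k)).Finite :=
    (Finset.Ioc k₀ n).finite_toSet.biUnion fun k _ => (hD k).biUnion fun w _ => (hball w _).1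
  calc (ball G r n).ncard
      ≤ (B ∪ ⋃ k ∈ Finset.Ioc k₀ n, ⋃ w ∈ D k, ball G w (n - k)).ncard :=
        Set.ncard_le_ncard hcover (hB.union hUfin)
    _ ≤ B.ncard + ∑ k ∈ Finset.Ioc k₀ n, (⋃ w ∈ D k, ball G w (n - k)).ncard := by
        grw [Set.ncard_union_le, Finset.set_ncard_biUnion_le]
    _ ≤ B.ncard + ∑ k ∈ Finset.Ioc k₀ n, (D k).ncard * (ball G r (n - k)).ncard := by
        gcongr with k
        exact Set.ncard_biUnion_le_ncard_mul (hD k) fun w _ => (hball w _).2.le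

def sphereStrategy (G : SimpleGraph V) (r : V) (R n₀ n : ℕ) : Set V :=
  if n₀ ≤ n then {v | G.dist r v = R + n + 1} else ∅

lemma burnSet_sphereStrategy_subset (hc : G.Connected) {R : ℕ} (hX : X₀ ⊆ ball G r R)
    (n₀ n : ℕ) : burnSet G X₀ (sphereStrategy G r R n₀) n ⊆ ball G r (R + min n n₀) := by
  induction n with
  | zero => exact hX
  | succ n ih =>
    rintro v (hv | ⟨hvp, u, hu, hadj⟩)
    · exact ball_mono G r (by omega) (ih hv)
    · have hu' : G.dist r u ≤ R + min n n₀ := ih hu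
      have hd : G.dist r v ≤ G.dist r u + 1 :=
        hc.dist_triangle.trans_eq (by rw [SimpleGraph.dist_eq_one_iff_adj.2 hadj])
      show G.dist r v ≤ R + min (n + 1) n₀
      by_contra hlt
      refine hvp (protSet_mono _ (show n₀ + 1 ≤ n + 1 by omega) (Set.subset_union_right ?_))
      simp only [sphereStrategy, le_refl, if_true]
      show G.dist r v = R + n₀ + 1
      omega

theorem containment_of_eventually_ncard_ball_le (hc : G.Connected)
    (hfin : ∀ k, (ball G r k).Finite)
    (hf : ∀ R, ∀ᶠ n in atTop, (ball G r (R + n + 1)).ncard ≤ f (n + 1)) : Containment G f := by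
  intro X₀ hX₀
  obtain ⟨R, hR⟩ : ∃ R, X₀ ⊆ ball G r R :=
    ⟨hX₀.toFinset.sup (G.dist r), fun v hv =>
      Finset.le_sup (f := G.dist r) (hX₀.mem_toFinset.2 hv)⟩
  obtain ⟨n₀, hn₀⟩ := eventually_atTop.1 (hf R)
  have hburn := burnSet_sphereStrategy_subset hc hR n₀
  refine ⟨sphereStrategy G r R n₀, fun n => ?_, ?_⟩
  · by_cases hn : n₀ ≤ n
    · have hsub : {v | G.dist r v = R + n + 1} ⊆ ball G r (R + n + 1) := fun v hv => hv.le
      simp only [sphereStrategy, hn, if_true]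
      refine ⟨(hfin _).subset hsub, (Set.ncard_le_ncard hsub (hfin _)).trans (hn₀ n hn),
        Set.disjoint_left.2 fun v (hv : G.dist r v = _) hvb => ?_⟩
      have : G.dist r v ≤ R + min n n₀ := hburn n hvb
      omega
    · simp [sphereStrategy, hn]
  · exact (hfin (R + n₀)).subset
      (Set.iUnion_subset fun n => (hburn n).trans (ball_mono G r (by omega)))

end Firefight

lemma le_two_mul_pow_of_renewal {a b : ℕ → ℝ} {E x : ℝ} {m : ℕ} (ha : ∀ k, 0 ≤ a k)
    (hE : 0 ≤ E) (hx : 1 ≤ x) (hsmall : ∀ n, ∑ k ∈ Finset.Ioc m n, a k / x ^ k ≤ 1 / 2)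
    (hrec : ∀ n, b n ≤ E + ∑ k ∈ Finset.Ioc m n, a k * b (n - k)) (n : ℕ) :
    b n ≤ 2 * E * x ^ n := by
  induction n using Nat.strong_induction_on with
  | _ n ih =>
  have hterm : ∀ k ∈ Finset.Ioc m n, a k * b (n - k) ≤ 2 * E * x ^ n * (a k / x ^ k) := by
    intro k hk
    obtain ⟨hmk, hkn⟩ := Finset.mem_Ioc.1 hk
    calc a k * b (n - k) ≤ a k * (2 * E * x ^ (n - k)) :=
          mul_le_mul_of_nonneg_left (ih _ (by omega)) (ha k)
      _ = 2 * E * x ^ n * (a k / x ^ k) := by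
          rw [pow_sub₀ _ (by positivity) hkn]
          field_simp
  have hxn : 1 ≤ x ^ n := one_le_pow₀ hx
  calc b n ≤ E + ∑ k ∈ Finset.Ioc m n, a k * b (n - k) := hrec n
    _ ≤ E + ∑ k ∈ Finset.Ioc m n, 2 * E * x ^ n * (a k / x ^ k) := by
        linarith [Finset.sum_le_sum hterm]
    _ = E + 2 * E * x ^ n * ∑ k ∈ Finset.Ioc m n, a k / x ^ k := by rw [Finset.mul_sum]
    _ ≤ E + 2 * E * x ^ n * (1 / 2) := by gcongr; exact hsmall n
    _ ≤ 2 * E * x ^ n := by nlinarith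

lemma le_of_tendsto_rpow_inv_of_le_mul_pow {b : ℕ → ℝ} {α A x : ℝ} (hb : ∀ n, 0 ≤ b n)
    (hx : 0 < x) (hα : Tendsto (fun n : ℕ => b n ^ (n : ℝ)⁻¹) atTop (𝓝 α))
    (hbA : ∀ n, b n ≤ A * x ^ n) : α ≤ x := by
  set A' := max A 1
  have hA' : 0 < A' := lt_max_of_lt_right one_pos
  have hroot : Tendsto (fun n : ℕ => A' ^ (n : ℝ)⁻¹ * x) atTop (𝓝 x) := by
    simpa [Function.comp_def] using
      (((Real.continuousAt_const_rpow hA'.ne').tendsto.comp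
        tendsto_inv_atTop_nhds_zero_nat).mul_const x)
  refine le_of_tendsto_of_tendsto hα hroot (eventually_atTop.2 ⟨1, fun n hn => ?_⟩)
  calc b n ^ (n : ℝ)⁻¹ ≤ (A' * x ^ n) ^ (n : ℝ)⁻¹ := by
        gcongr
        · exact hb n
        · exact (hbA n).trans (by gcongr; exact le_max_left _ _)
    _ = A' ^ (n : ℝ)⁻¹ * x := by
        rw [Real.mul_rpow hA'.le (by positivity), ← Real.rpow_natCast x n,
          ← Real.rpow_mul hx.le, mul_inv_cancel₀ (Nat.cast_ne_zero.2 (by omega)), Real.rpow_one]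

lemma eventually_le_pow_of_tendsto_rpow_inv {b : ℕ → ℝ} {α ν : ℝ} (hb : ∀ n, 0 ≤ b n)
    (hα : Tendsto (fun n : ℕ => b n ^ (n : ℝ)⁻¹) atTop (𝓝 α)) (hν : α < ν) :
    ∀ᶠ n in atTop, b n ≤ ν ^ n := by
  filter_upwards [hα.eventually_lt_const hν, eventually_ne_atTop 0] with n hn hn₀
  calc b n = (b n ^ (n : ℝ)⁻¹) ^ n := (Real.rpow_inv_natCast_pow (hb n) hn₀).symm
    _ ≤ ν ^ n := pow_le_pow_left₀ (Real.rpow_nonneg (hb n) _) hn.le n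

lemma eventually_pow_add_le_pow {ν μ : ℝ} (hν : 0 < ν) (hνμ : ν < μ) (R : ℕ) :
    ∀ᶠ n in atTop, ν ^ (R + n) ≤ μ ^ n := by
  have hμ : 0 < μ := hν.trans hνμ
  have hlim : Tendsto (fun n : ℕ => ν ^ R * (ν / μ) ^ n) atTop (𝓝 0) := by
    simpa using (tendsto_pow_atTop_nhds_zero_of_lt_one (by positivity)
      ((div_lt_one hμ).2 hνμ)).const_mul (ν ^ R)
  filter_upwards [hlim.eventually_le_const one_pos] with n hn
  calc ν ^ (R + n) = ν ^ R * (ν / μ) ^ n * μ ^ n := by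
        rw [div_pow, pow_add]
        field_simp
    _ ≤ 1 * μ ^ n := by gcongr
    _ = μ ^ n := one_mul _

lemma sum_range_le_of_le_mul_pow {f : ℕ → ℝ} {c lam : ℝ} (hc : 0 ≤ c) (hlam : 1 < lam)
    (hf : ∀ n, f n ≤ c * lam ^ n) (N : ℕ) :
    ∑ m ∈ Finset.range N, f (m + 1) ≤ c * lam / (lam - 1) * lam ^ N := by
  have hlam' : 0 < lam - 1 := by linarith
  calc ∑ m ∈ Finset.range N, f (m + 1) ≤ ∑ m ∈ Finset.range N, c * lam * lam ^ m :=
        Finset.sum_le_sum fun m _ => (hf (m + 1)).trans_eq (by ring)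
    _ = c * lam * ((lam ^ N - 1) / (lam - 1)) := by rw [← Finset.mul_sum, geom_sum_eq hlam.ne']
    _ ≤ c * lam / (lam - 1) * lam ^ N := by
        rw [mul_div_assoc', div_mul_eq_mul_div]
        gcongr
        linarith

lemma sum_Ioc_div_pow_le {a : ℕ → ℝ} {Q lam x : ℝ} (hQ : 0 ≤ Q) (hlam : 0 ≤ lam)
    (hx : lam < x) (ha : ∀ k, a k ≤ Q * lam ^ k) (m n : ℕ) :
    ∑ k ∈ Finset.Ioc m n, a k / x ^ k ≤ Q * (lam / x) ^ (m + 1) / (1 - lam / x) := by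
  have hx₀ : 0 < x := hlam.trans_lt hx
  calc ∑ k ∈ Finset.Ioc m n, a k / x ^ k ≤ ∑ k ∈ Finset.Ioc m n, Q * (lam / x) ^ k :=
        Finset.sum_le_sum fun k _ => by
          rw [div_pow, mul_div_assoc']
          gcongr
          exact ha k
    _ = Q * ∑ k ∈ Finset.Ico (m + 1) (n + 1), (lam / x) ^ k := by
        rw [Finset.mul_sum, show Finset.Ioc m n = Finset.Ico (m + 1) (n + 1) by ext; simp]
    _ ≤ Q * ((lam / x) ^ (m + 1) / (1 - lam / x)) := by
        gcongr
        exact geom_sum_Ico_le_of_lt_one (by positivity) ((div_lt_one hx₀).2 hx)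
    _ = Q * (lam / x) ^ (m + 1) / (1 - lam / x) := mul_div_assoc' ..

lemma natCast_le_coe_mul_ofReal_pow_iff {m : ℕ} {c : ℝ≥0} {lam : ℝ} (hlam : 0 ≤ lam) (n : ℕ) :
    (m : ℝ≥0∞) ≤ c * ENNReal.ofReal lam ^ n ↔ (m : ℝ) ≤ c * lam ^ n := by
  rw [← ENNReal.ofReal_pow hlam, ← ENNReal.ofReal_coe_nnreal, ← ENNReal.ofReal_mul c.coe_nonneg,
    ← ENNReal.ofReal_natCast, ENNReal.ofReal_le_ofReal_iff (by positivity)]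

namespace Firefight

variable {V : Type*} {G : SimpleGraph V} {r : V} {α : ℝ}

lemma ball_finite_of_tendsto
    (hα : Tendsto (fun k : ℕ => ((ball G r k).ncard : ℝ) ^ (k : ℝ)⁻¹) atTop (𝓝 α))
    (hα₀ : α ≠ 0) (k : ℕ) : (ball G r k).Finite := by
  by_contra hinf
  refine hα₀ (tendsto_nhds_unique hα (tendsto_const_nhds.congr' ?_))
  filter_upwards [eventually_ge_atTop (max k 1)] with m hm
  have hm₁ : 1 ≤ m := le_of_max_le_right hm
  rw [Set.Infinite.ncard fun h => hinf (h.subset (ball_mono G r (le_of_max_le_left hm))),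
    Nat.cast_zero, Real.zero_rpow (inv_ne_zero (Nat.cast_ne_zero.2 (by omega)))]

theorem not_expContainment_of_lt (hc : G.Connected) (htrans : ∀ w, ∃ φ : G ≃g G, φ r = w)
    (hα : Tendsto (fun k : ℕ => ((ball G r k).ncard : ℝ) ^ (k : ℝ)⁻¹) atTop (𝓝 α))
    {lam : ℝ} (hlam₁ : 1 < lam) (hlam : lam < α) : ¬ ExpContainment G (ENNReal.ofReal lam) := by
  rintro ⟨f, ⟨c, hfc⟩, hcont⟩
  have hfin : ∀ k, (ball G r k).Finite := ball_finite_of_tendsto hα (by linarith)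
  obtain ⟨x, hlamx, hxα⟩ := exists_between hlam
  set Q := (c : ℝ) * lam / (lam - 1)
  have hQ : 0 ≤ Q := div_nonneg (mul_nonneg c.coe_nonneg (by linarith)) (by linarith)
  obtain ⟨k₀, hk₀⟩ : ∃ k₀ : ℕ, Q * (lam / x) ^ (k₀ + 1) / (1 - lam / x) ≤ 1 / 2 := by
    have hlim : Tendsto (fun k : ℕ => Q * (lam / x) ^ (k + 1) / (1 - lam / x)) atTop (𝓝 0) := by
      simpa using (((tendsto_pow_atTop_nhds_zero_of_lt_one (div_nonneg (by linarith) (by linarith))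
        ((div_lt_one (by linarith)).2 hlamx)).comp (tendsto_add_atTop_nat 1)).const_mul Q).div_const
        (1 - lam / x)
    exact (hlim.eventually_le_const one_half_pos).exists
  obtain ⟨s, hvalid, hcontained⟩ := hcont _ (hfin k₀)
  have hs : ∀ n, (s n).Finite := fun n => (hvalid n).1
  have ha : ∀ k, (({w | G.dist r w = k} ∩ protSet s (k - k₀)).ncard : ℝ) ≤ Q * lam ^ k := by
    intro k
    calc (({w | G.dist r w = k} ∩ protSet s (k - k₀)).ncard : ℝ)
        ≤ (protSet s (k - k₀)).ncard :=
          Nat.cast_le.2 (Set.ncard_le_ncard Set.inter_subset_right (protSet_finite hs _))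
      _ ≤ ∑ m ∈ Finset.range (k - k₀), (f (m + 1) : ℝ) := by
          exact_mod_cast hvalid.ncard_protSet_le _
      _ ≤ Q * lam ^ (k - k₀) := sum_range_le_of_le_mul_pow c.coe_nonneg hlam₁
          (fun n => (natCast_le_coe_mul_ofReal_pow_iff (by linarith) n).1 (hfc n)) _
      _ ≤ Q * lam ^ k := by gcongr; exacts [hlam₁.le, Nat.sub_le _ _]
  have hgrowth := le_two_mul_pow_of_renewal
    (b := fun n => ((ball G r n).ncard : ℝ)) (fun k => Nat.cast_nonneg _) (Nat.cast_nonneg _)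
    (by linarith) (fun n => (sum_Ioc_div_pow_le hQ (by linarith) hlamx ha k₀ n).trans hk₀)
    (fun n => by exact_mod_cast ncard_ball_le_of_containsFire hc htrans hfin hs hcontained n)
  linarith [le_of_tendsto_rpow_inv_of_le_mul_pow (fun n => Nat.cast_nonneg _) (by linarith) hα
    hgrowth]

theorem expContainment_of_gt (hc : G.Connected)
    (hα : Tendsto (fun k : ℕ => ((ball G r k).ncard : ℝ) ^ (k : ℝ)⁻¹) atTop (𝓝 α))
    (hα₁ : 1 ≤ α) {μ : ℝ} (hμ : α < μ) : ExpContainment G (ENNReal.ofReal μ) := by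
  obtain ⟨ν, hαν, hνμ⟩ := exists_between hμ
  have hball := eventually_le_pow_of_tendsto_rpow_inv (fun k => Nat.cast_nonneg _) hα hαν
  refine ⟨fun n => ⌈μ ^ n⌉₊, ⟨2, fun n => ?_⟩,
    containment_of_eventually_ncard_ball_le hc (ball_finite_of_tendsto hα (by linarith))
      fun R => ?_⟩
  · rw [natCast_le_coe_mul_ofReal_pow_iff (by linarith)]
    exact Nat.ceil_le_two_mul ((by norm_num : (2 : ℝ)⁻¹ ≤ 1).trans (one_le_pow₀ (by linarith)))
  · have hshift : Tendsto (fun n => R + n + 1) atTop atTop :=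
      tendsto_atTop_mono (fun n => show n ≤ R + n + 1 by omega) tendsto_id
    filter_upwards [hshift.eventually hball, (tendsto_add_atTop_nat 1).eventually
      (eventually_pow_add_le_pow (by linarith) hνμ R)] with n h₁ h₂
    exact_mod_cast h₁.trans (h₂.trans (Nat.le_ceil _))

end Firefight

section Cayley

variable {Γ : Type*} [Group Γ] {S : Set Γ}

lemma cayley_eq_mulCayley : cayley Γ S = SimpleGraph.mulCayley S := by
  ext u v
  rw [SimpleGraph.mulCayley_adj]
  rfl

def cayleyMulLeft (g : Γ) : cayley Γ S ≃g cayley Γ S where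
  toEquiv := Equiv.mulLeft g
  map_rel_iff' := by simp [cayley_eq_mulCayley]

lemma cayley_reachable_mul_left (g : Γ) {u v : Γ} (h : (cayley Γ S).Reachable u v) :
    (cayley Γ S).Reachable (g * u) (g * v) :=
  h.map (cayleyMulLeft g).toHom

lemma cayley_connected (hgen : Subgroup.closure S = ⊤) : (cayley Γ S).Connected := by
  refine SimpleGraph.connected_iff_exists_forall_reachable _ |>.2 ⟨1, fun g => ?_⟩
  induction (hgen ▸ Subgroup.mem_top g : g ∈ Subgroup.closure S) using Subgroup.closure_induction
    with
  | mem x hx =>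
    rcases eq_or_ne x 1 with rfl | hne
    · rfl
    · exact SimpleGraph.Adj.reachable ⟨hne.symm, Or.inl (by simpa using hx)⟩
  | one => rfl
  | mul x y _ _ hx hy => exact hx.trans (by simpa using cayley_reachable_mul_left x hy)
  | inv x _ hx => simpa using (cayley_reachable_mul_left x⁻¹ hx).symm

end Cayley

/-- a Cayley graph of a finitely generated group with exponential growth
rate `α > 1` satisfies exponential containment of no rate `lam < α`; hence `λ_c = α`. -/
theorem stmt_12 {Γ : Type*} [Group Γ] (S : Finset Γ)
    (hgen : Subgroup.closure (S : Set Γ) = ⊤) (α : ℝ)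
    (hα : Filter.Tendsto
      (fun k : ℕ => ((ball (cayley Γ (S : Set Γ)) 1 k).ncard : ℝ) ^ ((k : ℝ)⁻¹))
      Filter.atTop (nhds α))
    (hα1 : 1 < α) :
    (∀ lam : ℝ, lam < α → ¬ ExpContainment (cayley Γ (S : Set Γ)) (ENNReal.ofReal lam)) ∧
    lambdaC (cayley Γ (S : Set Γ)) = ENNReal.ofReal α := by
  have hc := cayley_connected hgen
  have htrans : ∀ w, ∃ φ : cayley Γ S ≃g cayley Γ S, φ 1 = w :=
    fun w => ⟨cayleyMulLeft w, mul_one w⟩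
  have hlower : ∀ lam : ℝ, lam < α → ¬ ExpContainment (cayley Γ S) (ENNReal.ofReal lam) := by
    intro lam hlam h
    exact not_expContainment_of_lt hc htrans hα (lt_max_of_lt_right (by linarith))
      (max_lt hlam (by linarith : (1 + α) / 2 < α))
      (h.mono (ENNReal.ofReal_le_ofReal (le_max_left lam ((1 + α) / 2))))
  refine ⟨hlower, le_antisymm (le_of_forall_gt_imp_ge_of_dense fun c hc' => ?_)
    (le_sInf fun lam hlam => le_of_not_gt fun hlt => ?_)⟩
  · obtain ⟨μ, -, hαμ, hμc⟩ := ENNReal.lt_iff_exists_real_btwn.1 hc'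
    have hμ : ENNReal.ofReal μ ∈ {lam | ExpContainment (cayley Γ S) lam} :=
      expContainment_of_gt hc hα hα1.le
        ((ENNReal.ofReal_lt_ofReal_iff_of_nonneg (by linarith)).1 hαμ)
    exact (sInf_le hμ).trans hμc.le
  · refine hlower lam.toReal (ENNReal.toReal_lt_of_lt_ofReal hlt) ?_
    rwa [ENNReal.ofReal_toReal hlt.ne_top]
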